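/- arXiv:2310.09844 — 3 statements merged into one kernel-verified Lean document; each statement's English description precedes it below -/
import Mathlib

section
/- Solution recovery, part (a). Suppose each of the risk measures ℛ₁,...,ℛ_q is the worst-case risk measure, the risk measure ℛ₀ is monotone, and there exists (F̄,Ḡ) ∈ ℱ × 𝒢 such that for every ω ∈ Ω one has Ḡ(ξ(ω)) ∈ D_ε(δ) and (F̄(ξ(ω)), ℍ(Ḡ(ξ(ω)))) is a minimizer of the actual problem (AP)(ξ(ω)). Then (F̄,Ḡ) is feasible for the training problem (TP) and is a minimizer of (TP). -/
/-!
Over a finite sample space a worst-case constraint `⨆ ω, η ω ≤ 0` says exactly that `η ω ≤ 0`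
for every `ω`, so feasibility for (TP) is feasibility for every (AP)(ξ ω). Hence `(F̄, Ḡ)` is
feasible, its objective lies pointwise below that of any feasible `(F, G)`, and monotonicity of
`ℛ₀` carries the pointwise comparison over to the risks.
-/

open Filter Finset

/-- The multivariate Heaviside function. -/
noncomputable def Heav {s : ℕ} (v : EuclideanSpace ℝ (Fin s)) : EuclideanSpace ℝ (Fin s) :=
  WithLp.toLp 2 fun i => if v i ≤ 0 then 0 else 1

/-- The set `D_ε(δ) = ([−δ,−ε] ∪ [ε,δ])^m`, with `δ` possibly infinite. -/
def Dset (m : ℕ) (ε : ℝ) (δ : EReal) : Set (EuclideanSpace ℝ (Fin m)) :=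
  {g | ∀ i, ε ≤ |g i| ∧ ((|g i| : ℝ) : EReal) ≤ δ}

theorem Real.iSup_nonpos_iff_of_finite {ι : Type*} [Finite ι] {f : ι → ℝ} :
    ⨆ i, f i ≤ 0 ↔ ∀ i, f i ≤ 0 :=
  ⟨fun h i => (le_ciSup (Finite.bddAbove_range f) i).trans h, Real.iSup_nonpos⟩

theorem solution_recovery_a_general
    {r n m q : ℕ} {Ω : Type} [Fintype Ω]
    (ψ : Fin (q + 1) → EuclideanSpace ℝ (Fin r) → EuclideanSpace ℝ (Fin n) →
      EuclideanSpace ℝ (Fin m) → ℝ)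
    (C : Set (EuclideanSpace ℝ (Fin n) × EuclideanSpace ℝ (Fin m)))
    (ℱ : Set (EuclideanSpace ℝ (Fin r) → EuclideanSpace ℝ (Fin n)))
    (𝒢 : Set (EuclideanSpace ℝ (Fin r) → EuclideanSpace ℝ (Fin m)))
    (ξ : Ω → EuclideanSpace ℝ (Fin r))
    (R : Fin (q + 1) → (Ω → ℝ) → ℝ)
    (hR0mono : ∀ η η' : Ω → ℝ, (∀ ω, η ω ≤ η' ω) → R 0 η ≤ R 0 η')
    (hRworst : ∀ k : Fin q, R k.succ = fun η => ⨆ ω, η ω)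
    (ε : ℝ) (δ : EReal)
    (Fb : EuclideanSpace ℝ (Fin r) → EuclideanSpace ℝ (Fin n))
    (Gb : EuclideanSpace ℝ (Fin r) → EuclideanSpace ℝ (Fin m))
    (hD : ∀ ω, Gb (ξ ω) ∈ Dset m ε δ)
    (hAPmin : ∀ ω,
      ((Fb (ξ ω), Heav (Gb (ξ ω))) ∈ C ∧
        (∀ k : Fin q, ψ k.succ (ξ ω) (Fb (ξ ω)) (Heav (Gb (ξ ω))) ≤ 0)) ∧
      (∀ x y, (x, y) ∈ C → (∀ k : Fin q, ψ k.succ (ξ ω) x y ≤ 0) →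
        ψ 0 (ξ ω) (Fb (ξ ω)) (Heav (Gb (ξ ω))) ≤ ψ 0 (ξ ω) x y)) :
    ((∀ k : Fin q,
        R k.succ (fun ω => ψ k.succ (ξ ω) (Fb (ξ ω)) (Heav (Gb (ξ ω)))) ≤ 0) ∧
      (∀ ω, (Fb (ξ ω), Heav (Gb (ξ ω))) ∈ C) ∧ (∀ ω, Gb (ξ ω) ∈ Dset m ε δ)) ∧
    (∀ F ∈ ℱ, ∀ G ∈ 𝒢,
      (∀ k : Fin q,
        R k.succ (fun ω => ψ k.succ (ξ ω) (F (ξ ω)) (Heav (G (ξ ω)))) ≤ 0) →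
      (∀ ω, (F (ξ ω), Heav (G (ξ ω))) ∈ C) →
      (∀ ω, G (ξ ω) ∈ Dset m ε δ) →
      R 0 (fun ω => ψ 0 (ξ ω) (Fb (ξ ω)) (Heav (Gb (ξ ω)))) ≤
        R 0 (fun ω => ψ 0 (ξ ω) (F (ξ ω)) (Heav (G (ξ ω))))) := by
  have worst_nonpos_iff : ∀ (k : Fin q) (η : Ω → ℝ), R k.succ η ≤ 0 ↔ ∀ ω, η ω ≤ 0 :=
    fun k η => by rw [hRworst k]; exact Real.iSup_nonpos_iff_of_finite
  refine ⟨⟨fun k => (worst_nonpos_iff k _).2 fun ω => (hAPmin ω).1.2 k,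
    fun ω => (hAPmin ω).1.1, hD⟩, ?_⟩
  intro F _ G _ hfeas hC _
  exact hR0mono _ _ fun ω =>
    (hAPmin ω).2 _ _ (hC ω) fun k => (worst_nonpos_iff k _).1 (hfeas k) ω

/-- Solution recovery, part (a).  If `ℛ₁,…,ℛ_q` are worst-case risk measures,
`ℛ₀` is monotone, and `(F̄,Ḡ) ∈ ℱ × 𝒢` is such that for every `ω` the pair
`(F̄(ξω), ℍ(Ḡ(ξω)))` minimizes `(AP)(ξω)` with `Ḡ(ξω) ∈ D_ε(δ)`, then `(F̄,Ḡ)` is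
feasible for `(TP)` and is a minimizer of `(TP)`. -/
theorem solution_recovery_a
    {r n m q : ℕ} {Ω : Type} [Fintype Ω] [Nonempty Ω]
    (P : Ω → ℝ) (hP : ∀ ω, 0 < P ω) (hPsum : ∑ ω, P ω = 1)
    (ψ : Fin (q + 1) → EuclideanSpace ℝ (Fin r) → EuclideanSpace ℝ (Fin n) →
      EuclideanSpace ℝ (Fin m) → ℝ)
    (hψcont : ∀ k, Continuous fun p : EuclideanSpace ℝ (Fin r) × EuclideanSpace ℝ (Fin n) ×
      EuclideanSpace ℝ (Fin m) => ψ k p.1 p.2.1 p.2.2)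
    (C : Set (EuclideanSpace ℝ (Fin n) × EuclideanSpace ℝ (Fin m)))
    (hCne : C.Nonempty) (hCcl : IsClosed C)
    (hCbin : ∀ p ∈ C, ∀ i, p.2 i = 0 ∨ p.2 i = 1)
    (ℱ : Set (EuclideanSpace ℝ (Fin r) → EuclideanSpace ℝ (Fin n)))
    (𝒢 : Set (EuclideanSpace ℝ (Fin r) → EuclideanSpace ℝ (Fin m)))
    (hℱcont : ∀ F ∈ ℱ, Continuous F) (h𝒢cont : ∀ G ∈ 𝒢, Continuous G)
    (ξ : Ω → EuclideanSpace ℝ (Fin r))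
    (R : Fin (q + 1) → (Ω → ℝ) → ℝ)
    (hRconst : ∀ k (c : ℝ), R k (fun _ => c) = c)
    (hR0mono : ∀ η η' : Ω → ℝ, (∀ ω, η ω ≤ η' ω) → R 0 η ≤ R 0 η')
    (hRworst : ∀ k : Fin q, R k.succ = fun η => ⨆ ω, η ω)
    (ε : ℝ) (hε : 0 < ε) (δ : EReal) (hδ : (ε : EReal) < δ)
    (Fb : EuclideanSpace ℝ (Fin r) → EuclideanSpace ℝ (Fin n))
    (Gb : EuclideanSpace ℝ (Fin r) → EuclideanSpace ℝ (Fin m))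
    (hFb : Fb ∈ ℱ) (hGb : Gb ∈ 𝒢)
    (hD : ∀ ω, Gb (ξ ω) ∈ Dset m ε δ)
    (hAPmin : ∀ ω,
      ((Fb (ξ ω), Heav (Gb (ξ ω))) ∈ C ∧
        (∀ k : Fin q, ψ k.succ (ξ ω) (Fb (ξ ω)) (Heav (Gb (ξ ω))) ≤ 0)) ∧
      (∀ x y, (x, y) ∈ C → (∀ k : Fin q, ψ k.succ (ξ ω) x y ≤ 0) →
        ψ 0 (ξ ω) (Fb (ξ ω)) (Heav (Gb (ξ ω))) ≤ ψ 0 (ξ ω) x y)) :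
    ((∀ k : Fin q,
        R k.succ (fun ω => ψ k.succ (ξ ω) (Fb (ξ ω)) (Heav (Gb (ξ ω)))) ≤ 0) ∧
      (∀ ω, (Fb (ξ ω), Heav (Gb (ξ ω))) ∈ C) ∧ (∀ ω, Gb (ξ ω) ∈ Dset m ε δ)) ∧
    (∀ F ∈ ℱ, ∀ G ∈ 𝒢,
      (∀ k : Fin q,
        R k.succ (fun ω => ψ k.succ (ξ ω) (F (ξ ω)) (Heav (G (ξ ω)))) ≤ 0) →
      (∀ ω, (F (ξ ω), Heav (G (ξ ω))) ∈ C) →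
      (∀ ω, G (ξ ω) ∈ Dset m ε δ) →
      R 0 (fun ω => ψ 0 (ξ ω) (Fb (ξ ω)) (Heav (Gb (ξ ω)))) ≤
        R 0 (fun ω => ψ 0 (ξ ω) (F (ξ ω)) (Heav (G (ξ ω))))) :=
  solution_recovery_a_general ψ C ℱ 𝒢 ξ R hR0mono hRworst ε δ Fb Gb hD hAPmin
end

section
/- Translation equivariance of convex risk measures on finite spaces. Let Ω be a nonempty finite set and let ℛ : (Ω → ℝ) → ℝ be convex in the sense that ℛ((1−λ)η + λη') ≤ (1−λ)ℛ(η) + λℛ(η') for all λ ∈ [0,1] and all η, η' : Ω → ℝ, and suppose ℛ(η) = c whenever η is the constant function with value c. Then for every η : Ω → ℝ and every c ∈ ℝ, ℛ(η + c) = ℛ(η) + c, where η + c denotes the function ω ↦ η(ω) + c. -/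
/-!
Writing `x + y = (1 - l) • ((1 - l)⁻¹ • x) + l • (l⁻¹ • y)` and `(1 - l)⁻¹ • x` as a convex
combination of `x` and `2 • x` gives, for `0 < l ≤ 1/2`,
`f (x + y) ≤ f x + l * f (l⁻¹ • y) + l * (f (2 • x) - 2 * f x)`.
For a constant `y = c` the middle term is `c` by normalisation, and letting `l → 0` yields
`R (η + c) ≤ R η + c`; applied to `η + c` and `-c` this gives the reverse inequality.
-/

open Set Filter Topology

namespace ConvexOn

variable {E : Type*} [AddCommGroup E] [Module ℝ E] {f : E → ℝ}

theorem map_add_le_one_sub_mul_add_mul (hf : ConvexOn ℝ univ f) (x y : E) {l : ℝ}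
    (hl₀ : 0 < l) (hl₁ : l < 1) :
    f (x + y) ≤ (1 - l) * f ((1 - l)⁻¹ • x) + l * f (l⁻¹ • y) := by
  have hx : (1 - l) • (1 - l)⁻¹ • x = x := smul_inv_smul₀ (by linarith) x
  have hy : l • l⁻¹ • y = y := smul_inv_smul₀ hl₀.ne' y
  simpa only [hx, hy, smul_eq_mul] using
    hf.2 (mem_univ ((1 - l)⁻¹ • x)) (mem_univ (l⁻¹ • y)) (by linarith) hl₀.le
      (sub_add_cancel 1 l)

theorem one_sub_mul_map_inv_one_sub_smul_le (hf : ConvexOn ℝ univ f) (x : E) {l : ℝ}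
    (hl₀ : 0 ≤ l) (hl₁ : l ≤ 1 / 2) :
    (1 - l) * f ((1 - l)⁻¹ • x) ≤ (1 - 2 * l) * f x + l * f ((2 : ℝ) • x) := by
  have h1l : 0 < 1 - l := by linarith
  have hcomb : (1 - l)⁻¹ • x
      = ((1 - 2 * l) / (1 - l)) • x + (l / (1 - l)) • (2 : ℝ) • x := by
    rw [smul_smul, ← add_smul]
    congr 1
    field_simp
    ring
  have h : f ((1 - l)⁻¹ • x) ≤ (1 - 2 * l) / (1 - l) * f x + l / (1 - l) * f ((2 : ℝ) • x) :=
    hcomb ▸ hf.2 (mem_univ _) (mem_univ _) (div_nonneg (by linarith) h1l.le)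
      (div_nonneg hl₀ h1l.le) (by field_simp; ring)
  calc (1 - l) * f ((1 - l)⁻¹ • x)
      ≤ (1 - l) * ((1 - 2 * l) / (1 - l) * f x + l / (1 - l) * f ((2 : ℝ) • x)) :=
        mul_le_mul_of_nonneg_left h h1l.le
    _ = (1 - 2 * l) * f x + l * f ((2 : ℝ) • x) := by field_simp

theorem map_add_le_of_forall_mul_map_inv_smul_le (hf : ConvexOn ℝ univ f) (x y : E) {b : ℝ}
    (hy : ∀ l : ℝ, 0 < l → l * f (l⁻¹ • y) ≤ b) :
    f (x + y) ≤ f x + b := by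
  set K := f ((2 : ℝ) • x) - 2 * f x
  have hbound : ∀ l ∈ Ioo (0 : ℝ) (1 / 2), f (x + y) ≤ f x + b + l * K := fun l hl => by
    have h₁ := hf.map_add_le_one_sub_mul_add_mul x y hl.1 (by linarith [hl.2])
    have h₂ := hf.one_sub_mul_map_inv_one_sub_smul_le x hl.1.le hl.2.le
    linarith [hy l hl.1]
  have hlim : Tendsto (fun l : ℝ => f x + b + l * K) (𝓝[>] 0) (𝓝 (f x + b)) := by
    have := ((continuous_mul_const K).const_add (f x + b)).tendsto 0
    simpa only [zero_mul, add_zero] using this.mono_left nhdsWithin_le_nhds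
  exact ge_of_tendsto hlim (eventually_of_mem (Ioo_mem_nhdsGT (by norm_num)) hbound)

end ConvexOn

theorem translation_equivariance_of_convex_risk_general
    {Ω : Type}
    (R : (Ω → ℝ) → ℝ)
    (hconvex : ∀ l : ℝ, 0 ≤ l → l ≤ 1 → ∀ η η' : Ω → ℝ,
      R (fun ω => (1 - l) * η ω + l * η' ω) ≤ (1 - l) * R η + l * R η')
    (hconst : ∀ c : ℝ, R (fun _ => c) = c) :
    ∀ (η : Ω → ℝ) (c : ℝ), R (fun ω => η ω + c) = R η + c := by
  have hR : ConvexOn ℝ univ R := by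
    refine ⟨convex_univ, fun η _ η' _ a l _ hl hal => ?_⟩
    obtain rfl : a = 1 - l := by linarith
    exact hconvex l hl (by linarith) η η'
  have hshift : ∀ (η : Ω → ℝ) (c : ℝ), R (fun ω => η ω + c) ≤ R η + c := fun η c =>
    hR.map_add_le_of_forall_mul_map_inv_smul_le η (fun _ => c) fun l hl => by
      have hsmul : l⁻¹ • (fun _ => c : Ω → ℝ) = fun _ => l⁻¹ * c := rfl
      rw [hsmul, hconst, mul_inv_cancel_left₀ hl.ne']
  intro η c
  refine le_antisymm (hshift η c) ?_
  have := hshift (fun ω => η ω + c) (-c)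
  simp only [add_neg_cancel_right] at this
  linarith

/-- Translation equivariance of convex risk measures on finite spaces. -/
theorem translation_equivariance_of_convex_risk
    {Ω : Type} [Fintype Ω] [Nonempty Ω]
    (R : (Ω → ℝ) → ℝ)
    (hconvex : ∀ l : ℝ, 0 ≤ l → l ≤ 1 → ∀ η η' : Ω → ℝ,
      R (fun ω => (1 - l) * η ω + l * η' ω) ≤ (1 - l) * R η + l * R η')
    (hconst : ∀ c : ℝ, R (fun _ => c) = c) :
    ∀ (η : Ω → ℝ) (c : ℝ), R (fun ω => η ω + c) = R η + c :=
  translation_equivariance_of_convex_risk_general R hconvex hconst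
end

section
/- The superquantile risk measure is a monotone and convex measure of risk. Let (Ω, 2^Ω, P) be a finite probability space with Ω nonempty and P(ω) > 0 for all ω ∈ Ω, and let α ∈ (0,1). Then the α-superquantile S_α satisfies: (i) S_α(η) = c whenever η is constant with value c; (ii) S_α(η) ≤ S_α(η') whenever η(ω) ≤ η'(ω) for all ω ∈ Ω (monotonicity); (iii) S_α((1−λ)η + λη') ≤ (1−λ)S_α(η) + λS_α(η') for all λ ∈ [0,1] and all η, η' : Ω → ℝ (convexity). -/
/-!
The superquantile is the minimum over `z` of the Rockafellar–Uryasev function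
`z + E[max 0 (η - z)] / (1 - α)`, attained at the quantile: there the subdifferential in `z`,
`[1 - P(η ≥ z) / (1 - α), 1 - P(η > z) / (1 - α)]`, contains `0`. This function is monotone in `η`
and jointly convex in `(η, z)`; evaluating it at the quantile of `η'`, resp. at the convex
combination of the two quantiles, bounds the superquantile and transfers both properties.
-/

open Finset

/-- The `α`-quantile of a random variable on a finite probability space. -/
noncomputable def quantile {Ω : Type} [Fintype Ω] (P : Ω → ℝ) (α : ℝ) (η : Ω → ℝ) : ℝ :=
  sInf {z : ℝ | α ≤ ∑ ω ∈ univ.filter (fun ω => η ω ≤ z), P ω}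

/-- The `α`-superquantile of a random variable on a finite probability space. -/
noncomputable def superquantile {Ω : Type} [Fintype Ω] (P : Ω → ℝ) (α : ℝ) (η : Ω → ℝ) : ℝ :=
  quantile P α η + (1 / (1 - α)) * ∑ ω, P ω * max 0 (η ω - quantile P α η)

open Filter Topology

section

variable {Ω : Type} [Fintype Ω]

noncomputable def ruObjective (P : Ω → ℝ) (α : ℝ) (η : Ω → ℝ) (z : ℝ) : ℝ :=
  z + (1 / (1 - α)) * ∑ ω, P ω * max 0 (η ω - z)

theorem superquantile_eq_ruObjective (P : Ω → ℝ) (α : ℝ) (η : Ω → ℝ) :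
    superquantile P α η = ruObjective P α η (quantile P α η) := rfl

theorem exists_pos_forall_ne_imp_le_abs_sub (η : Ω → ℝ) (q : ℝ) :
    ∃ δ > 0, ∀ ω, η ω ≠ q → δ ≤ |η ω - q| := by
  have : ∀ᶠ δ in 𝓝[>] (0 : ℝ), ∀ ω, η ω ≠ q → δ ≤ |η ω - q| := eventually_all.2 fun ω => by
    by_cases h : η ω = q
    · exact Eventually.of_forall fun _ hne => absurd h hne
    · filter_upwards [Ioo_mem_nhdsGT (abs_pos.2 (sub_ne_zero.2 h))] with δ hδ _
      exact hδ.2.le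
  exact (this.and self_mem_nhdsWithin).exists.imp fun δ h => ⟨h.2, h.1⟩

theorem quantile_set_nonempty {P : Ω → ℝ} (hPsum : ∑ ω, P ω = 1) {α : ℝ} (hα1 : α ≤ 1)
    (η : Ω → ℝ) : {z : ℝ | α ≤ ∑ ω ∈ univ.filter (fun ω => η ω ≤ z), P ω}.Nonempty := by
  obtain ⟨b, hb⟩ := (Set.finite_range η).bddAbove
  refine ⟨b, ?_⟩
  rwa [Set.mem_ofPred_eq, filter_true_of_mem fun ω _ => hb (Set.mem_range_self ω), hPsum]

theorem quantile_set_bddBelow (P : Ω → ℝ) {α : ℝ} (hα0 : 0 < α) (η : Ω → ℝ) :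
    BddBelow {z : ℝ | α ≤ ∑ ω ∈ univ.filter (fun ω => η ω ≤ z), P ω} := by
  obtain ⟨b, hb⟩ := (Set.finite_range η).bddBelow
  refine ⟨b, fun z hz => ?_⟩
  by_contra! hzb
  rw [Set.mem_ofPred_eq, filter_false_of_mem fun ω _ => not_le.2 (hzb.trans_le
    (hb (Set.mem_range_self ω))), sum_empty] at hz
  linarith

theorem quantile_const {P : Ω → ℝ} (hPsum : ∑ ω, P ω = 1) {α : ℝ} (hα0 : 0 < α) (hα1 : α ≤ 1)
    (c : ℝ) : quantile P α (fun _ => c) = c := by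
  suffices {z : ℝ | α ≤ ∑ ω ∈ univ.filter (fun _ => c ≤ z), P ω} = Set.Ici c by
    rw [quantile, this, csInf_Ici]
  ext z
  by_cases hz : c ≤ z
  · simpa [hz, hPsum] using hα1
  · simpa [hz] using hα0

theorem le_sum_filter_le_quantile {P : Ω → ℝ} (hP : ∀ ω, 0 ≤ P ω) (hPsum : ∑ ω, P ω = 1)
    {α : ℝ} (hα1 : α ≤ 1) (η : Ω → ℝ) :
    α ≤ ∑ ω ∈ univ.filter (fun ω => η ω ≤ quantile P α η), P ω := by
  obtain ⟨δ, hδ, hgap⟩ := exists_pos_forall_ne_imp_le_abs_sub η (quantile P α η)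
  obtain ⟨z, hz, hzq⟩ := exists_lt_of_csInf_lt (quantile_set_nonempty hPsum hα1 η)
    (lt_add_of_pos_right (quantile P α η) hδ)
  refine hz.trans (sum_le_sum_of_subset_of_nonneg
    (monotone_filter_right _ fun ω _ hω => ?_) fun ω _ _ => hP ω)
  by_contra! hq
  have := hgap ω hq.ne'
  rw [abs_of_pos (sub_pos.2 hq)] at this
  linarith

theorem sum_filter_lt_quantile_le {P : Ω → ℝ} (hP : ∀ ω, 0 ≤ P ω) {α : ℝ} (hα0 : 0 < α)
    (η : Ω → ℝ) : ∑ ω ∈ univ.filter (fun ω => η ω < quantile P α η), P ω ≤ α := by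
  obtain ⟨δ, hδ, hgap⟩ := exists_pos_forall_ne_imp_le_abs_sub η (quantile P α η)
  have hδq : quantile P α η - δ ∉ {z : ℝ | α ≤ ∑ ω ∈ univ.filter (fun ω => η ω ≤ z), P ω} :=
    fun h => by
      have : quantile P α η ≤ quantile P α η - δ := csInf_le (quantile_set_bddBelow P hα0 η) h
      linarith
  refine (lt_of_le_of_lt (sum_le_sum_of_subset_of_nonneg
    (monotone_filter_right _ fun ω _ hω => ?_) fun ω _ _ => hP ω) (not_le.1 hδq)).le
  have := hgap ω hω.ne
  rw [abs_of_neg (sub_neg.2 hω)] at this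
  linarith

/-- `-𝟙_p` is a subgradient at `q` of every `z ↦ max 0 (η ω - z)`. -/
theorem ruObjective_le_of_subgradient {P : Ω → ℝ} (hP : ∀ ω, 0 ≤ P ω) {α : ℝ} (hα1 : α < 1)
    (η : Ω → ℝ) {q z : ℝ} (p : Ω → Prop) [DecidablePred p] (hlt : ∀ ω, q < η ω → p ω)
    (hle : ∀ ω, p ω → q ≤ η ω)
    (hsign : 0 ≤ (z - q) * (1 - α - ∑ ω ∈ univ.filter p, P ω)) :
    ruObjective P α η q ≤ ruObjective P α η z := by
  have hsum : ∑ ω, P ω * max 0 (η ω - q) - (z - q) * ∑ ω ∈ univ.filter p, P ω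
      ≤ ∑ ω, P ω * max 0 (η ω - z) := by
    rw [sum_filter, mul_sum, ← sum_sub_distrib]
    refine sum_le_sum fun ω _ => ?_
    split_ifs with h
    · rw [max_eq_right (sub_nonneg.2 (hle ω h))]
      nlinarith [hP ω, le_max_right 0 (η ω - z)]
    · rw [max_eq_left (sub_nonpos.2 (not_lt.1 (mt (hlt ω) h)))]
      nlinarith [hP ω, le_max_left 0 (η ω - z)]
  have hc : (1 / (1 - α)) * (1 - α) = 1 := one_div_mul_cancel (sub_ne_zero.2 hα1.ne')
  have hc0 : 0 ≤ 1 / (1 - α) := by have := sub_pos.2 hα1; positivity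
  unfold ruObjective
  linear_combination mul_le_mul_of_nonneg_left hsum hc0 + mul_nonneg hc0 hsign + (z - q) * hc

theorem superquantile_le_ruObjective {P : Ω → ℝ} (hP : ∀ ω, 0 ≤ P ω) (hPsum : ∑ ω, P ω = 1)
    {α : ℝ} (hα0 : 0 < α) (hα1 : α < 1) (η : Ω → ℝ) (z : ℝ) :
    superquantile P α η ≤ ruObjective P α η z := by
  rw [superquantile_eq_ruObjective]
  set q := quantile P α η
  rcases le_total q z with hz | hz
  · have hsplit := sum_filter_add_sum_filter_not univ (fun ω => η ω ≤ q) P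
    simp only [not_le, hPsum] at hsplit
    refine ruObjective_le_of_subgradient hP hα1 η (fun ω => q < η ω) (fun _ => id)
      (fun _ => le_of_lt) (mul_nonneg (sub_nonneg.2 hz) ?_)
    linarith [le_sum_filter_le_quantile hP hPsum hα1.le η]
  · have hsplit := sum_filter_add_sum_filter_not univ (fun ω => η ω < q) P
    simp only [not_lt, hPsum] at hsplit
    refine ruObjective_le_of_subgradient hP hα1 η (fun ω => q ≤ η ω) (fun _ => le_of_lt)
      (fun _ => id) (mul_nonneg_of_nonpos_of_nonpos (sub_nonpos.2 hz) ?_)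
    linarith [sum_filter_lt_quantile_le hP hα0 η]

theorem ruObjective_mono_left {P : Ω → ℝ} (hP : ∀ ω, 0 ≤ P ω) {α : ℝ} (hα1 : α ≤ 1)
    {η η' : Ω → ℝ} (h : ∀ ω, η ω ≤ η' ω) (z : ℝ) :
    ruObjective P α η z ≤ ruObjective P α η' z := by
  have hc0 : 0 ≤ 1 / (1 - α) := one_div_nonneg.2 (sub_nonneg.2 hα1)
  unfold ruObjective
  gcongr with ω
  · exact hP ω
  · exact h ω

theorem max_zero_convex_comb_le {l : ℝ} (hl0 : 0 ≤ l) (hl1 : l ≤ 1) (a b : ℝ) :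
    max 0 ((1 - l) * a + l * b) ≤ (1 - l) * max 0 a + l * max 0 b :=
  max_le
    (add_nonneg (mul_nonneg (sub_nonneg.2 hl1) (le_max_left _ _))
      (mul_nonneg hl0 (le_max_left _ _)))
    (add_le_add (mul_le_mul_of_nonneg_left (le_max_right _ _) (sub_nonneg.2 hl1))
      (mul_le_mul_of_nonneg_left (le_max_right _ _) hl0))

theorem ruObjective_convex_comb_le {P : Ω → ℝ} (hP : ∀ ω, 0 ≤ P ω) {α : ℝ} (hα1 : α ≤ 1)
    {l : ℝ} (hl0 : 0 ≤ l) (hl1 : l ≤ 1) (η η' : Ω → ℝ) (z z' : ℝ) :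
    ruObjective P α (fun ω => (1 - l) * η ω + l * η' ω) ((1 - l) * z + l * z')
      ≤ (1 - l) * ruObjective P α η z + l * ruObjective P α η' z' := by
  have hsum : ∑ ω, P ω * max 0 ((1 - l) * η ω + l * η' ω - ((1 - l) * z + l * z'))
      ≤ (1 - l) * ∑ ω, P ω * max 0 (η ω - z) + l * ∑ ω, P ω * max 0 (η' ω - z') := by
    rw [mul_sum, mul_sum, ← sum_add_distrib]
    refine sum_le_sum fun ω _ => ?_
    convert mul_le_mul_of_nonneg_left
      (max_zero_convex_comb_le hl0 hl1 (η ω - z) (η' ω - z')) (hP ω) using 3 <;> ring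
  have hc0 : 0 ≤ 1 / (1 - α) := one_div_nonneg.2 (sub_nonneg.2 hα1)
  unfold ruObjective
  nlinarith [mul_le_mul_of_nonneg_left hsum hc0]

end

theorem superquantile_const_monotone_convex_general
    {Ω : Type} [Fintype Ω]
    (P : Ω → ℝ) (hP : ∀ ω, 0 < P ω) (hPsum : ∑ ω, P ω = 1)
    (α : ℝ) (hα0 : 0 < α) (hα1 : α < 1) :
    (∀ c : ℝ, superquantile P α (fun _ => c) = c) ∧
    (∀ η η' : Ω → ℝ, (∀ ω, η ω ≤ η' ω) → superquantile P α η ≤ superquantile P α η') ∧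
    (∀ l : ℝ, 0 ≤ l → l ≤ 1 → ∀ η η' : Ω → ℝ,
      superquantile P α (fun ω => (1 - l) * η ω + l * η' ω) ≤
        (1 - l) * superquantile P α η + l * superquantile P α η') := by
  have hP' : ∀ ω, 0 ≤ P ω := fun ω => (hP ω).le
  have hS := superquantile_le_ruObjective hP' hPsum hα0 hα1
  refine ⟨fun c => ?_, fun η η' h => ?_, fun l hl0 hl1 η η' => ?_⟩
  · simp [superquantile, quantile_const hPsum hα0 hα1.le]
  · exact (hS η _).trans (ruObjective_mono_left hP' hα1.le h _)
  · exact (hS _ _).trans (ruObjective_convex_comb_le hP' hα1.le hl0 hl1 η η' _ _)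

/-- The superquantile risk measure is a monotone and convex measure of risk. -/
theorem superquantile_const_monotone_convex
    {Ω : Type} [Fintype Ω] [Nonempty Ω]
    (P : Ω → ℝ) (hP : ∀ ω, 0 < P ω) (hPsum : ∑ ω, P ω = 1)
    (α : ℝ) (hα0 : 0 < α) (hα1 : α < 1) :
    (∀ c : ℝ, superquantile P α (fun _ => c) = c) ∧
    (∀ η η' : Ω → ℝ, (∀ ω, η ω ≤ η' ω) → superquantile P α η ≤ superquantile P α η') ∧
    (∀ l : ℝ, 0 ≤ l → l ≤ 1 → ∀ η η' : Ω → ℝ,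
      superquantile P α (fun ω => (1 - l) * η ω + l * η' ω) ≤
        (1 - l) * superquantile P α η + l * superquantile P α η') :=
  superquantile_const_monotone_convex_general P hP hPsum α hα0 hα1
end
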